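/- arXiv:0907.1477 — 6 statements merged into one kernel-verified Lean document; each statement's English description precedes it below -/
import Mathlib

section
/- Let m, S, b be integers with S ≥ 5, S/2 < m < S, 1 ≤ b < S/2, and let a = S - b. For any z in the open sector S_m = {z ≠ 0 : -π/m < arg z < π/m} with |z| > 1, the integral I(z) = ∫_{[z, z∞)} (1+u^m)^{b/m} du/u^{S+1} (integration along the ray {tz : t ≥ 1}, principal branch of the m-th root power) equals the convergent series Σ_{n≥0} (1/(a+mn))·binom(b/m, n)·z^{-a-mn}, where binom(b/m,n) is the generalized binomial coefficient. -/
/-! For `u = t z` in the sector with `‖u‖ > 1` the principal branch factors as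
`(1 + u^m)^(b/m) = u^b (1 + u^(-m))^(b/m)`: the arguments of `u^m` and of `1 + u^(-m)` have
opposite signs, so they add without crossing the branch cut, and `m · arg u ∈ (-π, π)` gives
`(u^m)^(b/m) = u^b`. Expanding `(1 + u^(-m))^(b/m)` by the binomial series turns the integrand
into a series in the powers `t^(-a-mn-1)`, which is integrated term by term over `(1, ∞)`; as
`|binom(b/m, n)| ≤ 1`, the integrated norms are dominated by a geometric series in `‖z‖^(-m)`. -/

open Complex MeasureTheory

/-- Generalized binomial coefficient `binom(x, n)` for complex `x`. -/
noncomputable def genBinomC (x : ℂ) (n : ℕ) : ℂ :=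
    (∏ k ∈ Finset.range n, (x - k)) / (n.factorial : ℂ)

/-- The Abelian integral `I_{m,S,b}(z) = (1/z^S) ∫_1^∞ (1+(tz)^m)^{b/m} dt/t^{S+1}`,
i.e. `∫_{[z,z∞)} (1+u^m)^{b/m} du/u^{S+1}` (principal branch). -/
noncomputable def abelI (m S b : ℕ) (z : ℂ) : ℂ :=
    z ^ (-(S : ℤ)) *
      ∫ t in Set.Ioi (1 : ℝ), (1 + ((t : ℂ) * z) ^ m) ^ ((b : ℂ) / m) / (t : ℂ) ^ (S + 1)

open scoped Real
open Set

lemma genBinomC_eq_choose (x : ℂ) (n : ℕ) : genBinomC x n = Ring.choose x n := by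
  rw [Ring.choose_eq_smul, genBinomC, ← Polynomial.aeval_eq_smeval, Polynomial.aeval_def,
    Polynomial.eval₂_eq_eval_map, descPochhammer_map, descPochhammer_eval_eq_prod_range,
    smul_eq_mul, div_eq_inv_mul]

lemma hasSum_genBinomC_mul_pow (x : ℂ) {w : ℂ} (hw : ‖w‖ < 1) :
    HasSum (fun n ↦ genBinomC x n * w ^ n) ((1 + w) ^ x) := by
  have := one_add_cpow_hasFPowerSeriesOnBall_zero (a := x) |>.hasSum (y := w)
    (by simpa [← ofReal_norm] using hw)
  simpa [genBinomC_eq_choose, binomialSeries, FormalMultilinearSeries.coeff_ofScalars, mul_comm]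
    using this

lemma norm_genBinomC_le_one {x : ℂ} (hx : ‖x‖ ≤ 1) (n : ℕ) : ‖genBinomC x n‖ ≤ 1 := by
  rw [genBinomC, norm_div, Complex.norm_prod, Complex.norm_natCast,
    div_le_one (by exact_mod_cast n.factorial_pos), ← Finset.prod_range_add_one_eq_factorial]
  push_cast
  gcongr with k
  exact (norm_sub_le _ _).trans (by simp; linarith)

lemma re_one_add_inv_pos {v : ℂ} (hv : 1 < ‖v‖) : 0 < (1 + v⁻¹).re := by
  have : ‖v⁻¹‖ < 1 := by rw [norm_inv]; exact inv_lt_one_of_one_lt₀ hv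
  linarith [neg_abs_le v⁻¹.re, abs_re_le_norm v⁻¹, show (1 + v⁻¹).re = 1 + v⁻¹.re by simp]

lemma arg_add_arg_one_add_inv_mem_Ioc {v : ℂ} (hv : 1 < ‖v‖) :
    arg v + arg (1 + v⁻¹) ∈ Ioc (-π) π := by
  have hre := re_one_add_inv_pos hv
  have hhalf := abs_lt.mp (abs_arg_lt_pi_div_two_iff.2 (Or.inl hre))
  have him : (1 + v⁻¹).im = -v.im / normSq v := by simp [inv_im]
  rcases lt_or_ge v.im 0 with hneg | hnonneg
  · have hargw : 0 ≤ arg (1 + v⁻¹) :=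
      arg_nonneg_iff.2 (him ▸ div_nonneg (by linarith) (normSq_nonneg v))
    constructor <;> linarith [arg_neg_iff.2 hneg, neg_pi_lt_arg v, Real.pi_pos]
  · have hle : (1 + v⁻¹).im ≤ 0 :=
      him ▸ div_nonpos_of_nonpos_of_nonneg (by linarith) (normSq_nonneg v)
    have hargw : arg (1 + v⁻¹) ≤ 0 := by
      rcases hle.lt_or_eq with hlt | heq
      · exact (arg_neg_iff.2 hlt).le
      · exact (arg_eq_zero_iff.2 ⟨hre.le, heq⟩).le
    constructor <;> linarith [arg_nonneg_iff.2 hnonneg, arg_le_pi v, Real.pi_pos]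

lemma one_add_cpow_of_one_lt_norm {v : ℂ} (hv : 1 < ‖v‖) (c : ℂ) :
    (1 + v) ^ c = v ^ c * (1 + v⁻¹) ^ c := by
  have hv0 : v ≠ 0 := norm_pos_iff.mp (one_pos.trans hv)
  have h1 : 1 + v⁻¹ ≠ 0 := fun h ↦ by simpa [h] using re_one_add_inv_pos hv
  have hfactor : 1 + v = v * (1 + v⁻¹) := by field_simp; ring
  rw [hfactor, cpow_def_of_ne_zero (mul_ne_zero hv0 h1), cpow_def_of_ne_zero hv0,
    cpow_def_of_ne_zero h1, log_mul hv0 h1 (arg_add_arg_one_add_inv_mem_Ioc hv), add_mul,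
    Complex.exp_add]

lemma pow_cpow_natCast_div {m : ℕ} (hm : 0 < m) (b : ℕ) {u : ℂ} (h1 : -(π / m) < u.arg)
    (h2 : u.arg < π / m) : (u ^ m) ^ ((b : ℂ) / m) = u ^ b := by
  have hm' : (0 : ℝ) < m := by exact_mod_cast hm
  have hlo : -π < m * arg u := by rw [← neg_div] at h1; exact (div_lt_iff₀' hm').1 h1
  have hhi : m * arg u < π := (lt_div_iff₀' hm').1 h2
  have him : (log u * m).im = m * arg u := by simp [log_im, mul_comm]
  rw [← cpow_natCast u m, ← cpow_mul _ (him ▸ hlo) (him ▸ hhi.le),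
    mul_div_cancel₀ _ (by exact_mod_cast hm.ne'), cpow_natCast]

lemma hasSum_integral_Ioi_one_of_hasSum_rpow {A : ℕ → ℂ} {p : ℕ → ℝ} {f : ℝ → ℂ}
    (hp : ∀ n, 0 < p n) (hA : Summable fun n ↦ ‖A n‖ / p n)
    (hf : ∀ t ∈ Ioi (1 : ℝ), HasSum (fun n ↦ A n * ((t ^ (-p n - 1) : ℝ) : ℂ)) (f t)) :
    HasSum (fun n ↦ A n / p n) (∫ t in Ioi 1, f t) := by
  have hexp : ∀ n, -p n - 1 < -1 := fun n ↦ by linarith [hp n]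
  have hint : ∀ n, ∫ t in Ioi (1 : ℝ), t ^ (-p n - 1) = 1 / p n := fun n ↦ by
    rw [integral_Ioi_rpow_of_lt (hexp n) one_pos, Real.one_rpow, sub_add_cancel, neg_div_neg_eq]
  have key := hasSum_integral_of_summable_integral_norm
    (F := fun n t ↦ A n * ((t ^ (-p n - 1) : ℝ) : ℂ))
    (fun n ↦ (integrableOn_Ioi_rpow_of_lt (hexp n) one_pos).ofReal.const_mul _) ?_
  · have hterm : (fun n ↦ ∫ t in Ioi (1 : ℝ), A n * ((t ^ (-p n - 1) : ℝ) : ℂ)) =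
        fun n ↦ A n / p n := funext fun n ↦ by
      rw [integral_const_mul, integral_complex_ofReal, hint, ofReal_div, ofReal_one, mul_one_div]
    rwa [setIntegral_congr_fun measurableSet_Ioi fun t ht ↦ (hf t ht).tsum_eq, hterm] at key
  · convert hA using 2 with n
    rw [← mul_one_div, ← hint, ← integral_const_mul]
    refine setIntegral_congr_fun measurableSet_Ioi fun t ht ↦ ?_
    rw [norm_mul, norm_real, Real.norm_of_nonneg (Real.rpow_nonneg (zero_le_one.trans ht.le) _)]

lemma hasSum_one_add_pow_cpow {m : ℕ} (hm : 0 < m) (b : ℕ) {u : ℂ} (h1 : -(π / m) < u.arg)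
    (h2 : u.arg < π / m) (hu : 1 < ‖u‖) :
    HasSum (fun n ↦ genBinomC ((b : ℂ) / m) n * u ^ b * ((u ^ m)⁻¹) ^ n)
      ((1 + u ^ m) ^ ((b : ℂ) / m)) := by
  have hum : 1 < ‖u ^ m‖ := by rw [norm_pow]; exact one_lt_pow₀ hu hm.ne'
  rw [one_add_cpow_of_one_lt_norm hum, pow_cpow_natCast_div hm b h1 h2]
  have := (hasSum_genBinomC_mul_pow ((b : ℂ) / m)
    (by rw [norm_inv]; exact inv_lt_one_of_one_lt₀ hum)).mul_left (u ^ b)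
  simpa only [mul_left_comm, mul_assoc] using this

lemma hasSum_abelI_integrand {m : ℕ} (hm : 0 < m) (a b : ℕ) {z : ℂ} (h1 : -(π / m) < z.arg)
    (h2 : z.arg < π / m) (hz : 1 < ‖z‖) {t : ℝ} (ht : 1 ≤ t) :
    HasSum (fun n ↦ genBinomC ((b : ℂ) / m) n * z ^ b * ((z ^ m)⁻¹) ^ n *
        ((t ^ (-((a + m * n : ℕ) : ℝ) - 1) : ℝ) : ℂ))
      ((1 + ((t : ℂ) * z) ^ m) ^ ((b : ℂ) / m) / (t : ℂ) ^ (a + b + 1)) := by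
  have ht0 : 0 < t := one_pos.trans_le ht
  have hz0 : z ≠ 0 := norm_pos_iff.mp (one_pos.trans hz)
  have htz : 1 < ‖(t : ℂ) * z‖ := by
    rw [norm_mul, norm_real, Real.norm_of_nonneg ht0.le]
    exact one_lt_mul_of_le_of_lt ht hz
  have harg : arg (t * z) = arg z := arg_real_mul z ht0
  refine ((hasSum_one_add_pow_cpow hm b (harg ▸ h1) (harg ▸ h2) htz).div_const
    ((t : ℂ) ^ (a + b + 1))).congr_fun fun n ↦ ?_
  have hrpow : ((t ^ (-((a + m * n : ℕ) : ℝ) - 1) : ℝ) : ℂ) = ((t : ℂ) ^ (a + m * n + 1))⁻¹ := by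
    rw [← neg_add', Real.rpow_neg ht0.le, ← Nat.cast_add_one, Real.rpow_natCast]
    push_cast; rfl
  have ht0' : (t : ℂ) ≠ 0 := ofReal_ne_zero.mpr ht0.ne'
  rw [hrpow]
  simp only [mul_pow, inv_pow]
  field_simp
  ring

lemma summable_norm_genBinomC_mul_geometric_div {x : ℂ} (hx : ‖x‖ ≤ 1) (y : ℂ) {w : ℂ}
    (hw : ‖w‖ < 1) {p : ℕ → ℝ} (hp : ∀ n, 1 ≤ p n) :
    Summable fun n ↦ ‖genBinomC x n * y * w ^ n‖ / p n := by
  refine Summable.of_nonneg_of_le (fun n ↦ div_nonneg (norm_nonneg _) (zero_le_one.trans (hp n)))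
    (fun n ↦ ?_) ((summable_geometric_of_lt_one (norm_nonneg w) hw).mul_left ‖y‖)
  rw [norm_mul, norm_mul, norm_pow, mul_assoc]
  calc ‖genBinomC x n‖ * (‖y‖ * ‖w‖ ^ n) / p n ≤ ‖genBinomC x n‖ * (‖y‖ * ‖w‖ ^ n) :=
        div_le_self (by positivity) (hp n)
    _ ≤ ‖y‖ * ‖w‖ ^ n := mul_le_of_le_one_left (by positivity) (norm_genBinomC_le_one hx n)

theorem stmt5_general (m S b a : ℕ) (hlarge : S < 2 * m)
    (hb2 : 2 * b < S) (ha : a + b = S)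
    (z : ℂ) (harg1 : -(Real.pi / m) < z.arg) (harg2 : z.arg < Real.pi / m)
    (hz1 : 1 < ‖z‖) :
    HasSum
      (fun n : ℕ =>
        (1 / ((a : ℂ) + m * n)) * genBinomC ((b : ℂ) / m) n * z ^ (-(a : ℤ) - m * n))
      (abelI m S b z) := by
  subst ha
  have hm : 0 < m := by omega
  have hz0 : z ≠ 0 := norm_pos_iff.mp (one_pos.trans hz1)
  have hw : ‖(z ^ m)⁻¹‖ < 1 := by
    rw [norm_inv, norm_pow]; exact inv_lt_one_of_one_lt₀ (one_lt_pow₀ hz1 hm.ne')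
  have hx : ‖(b : ℂ) / m‖ ≤ 1 := by
    rw [norm_div, norm_natCast, norm_natCast, div_le_one (by positivity)]
    exact_mod_cast (by omega : b ≤ m)
  have hp : ∀ n : ℕ, (1 : ℝ) ≤ ((a + m * n : ℕ) : ℝ) := fun n ↦ by
    exact_mod_cast (by omega : 1 ≤ a + m * n)
  have hI := hasSum_integral_Ioi_one_of_hasSum_rpow (fun n ↦ one_pos.trans_le (hp n))
    (summable_norm_genBinomC_mul_geometric_div hx (z ^ b) hw hp)
    (fun t ht ↦ hasSum_abelI_integrand hm a b harg1 harg2 hz1 (mem_Ioi.mp ht).le)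
  refine (hI.mul_left (z ^ (-((a + b : ℕ) : ℤ)))).congr_fun fun n ↦ ?_
  rw [show (-(a : ℤ) - m * n) = -((a + m * n : ℕ) : ℤ) by push_cast; ring, zpow_neg, zpow_neg,
    zpow_natCast, zpow_natCast]
  push_cast
  simp only [inv_pow, ← pow_mul]
  field_simp
  ring

/-- Power series expansion of `I = I_{m,S,b}` at infinity on the sector `S_m`:
for `z ∈ S_m` with `|z| > 1`,
`I(z) = Σ_{n≥0} (1/(a+mn))·binom(b/m,n)·z^{-a-mn}`, where `a = S - b`. -/
theorem stmt5 (m S b a : ℕ) (hS : 5 ≤ S) (hlarge : S < 2 * m) (hmS : m < S)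
    (hb1 : 1 ≤ b) (hb2 : 2 * b < S) (ha : a + b = S)
    (z : ℂ) (hz0 : z ≠ 0) (harg1 : -(Real.pi / m) < z.arg) (harg2 : z.arg < Real.pi / m)
    (hz1 : 1 < ‖z‖) :
    HasSum
      (fun n : ℕ =>
        (1 / ((a : ℂ) + m * n)) * genBinomC ((b : ℂ) / m) n * z ^ (-(a : ℤ) - m * n))
      (abelI m S b z) :=
  stmt5_general m S b a hlarge hb2 ha z harg1 harg2 hz1
end

section
/- Under the same hypotheses, the function I(z) = ∫_{[z,z∞)} (1+u^m)^{b/m} du/u^{S+1} is holomorphic on the open set O_m = ℂ minus the union of the rays ℝ_{≥0}·e^{iπ(1+2p)/m} for p = 0,…,m-1, and its derivative is I'(z) = -(1+z^m)^{b/m}/z^{S+1}. -/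
open Complex MeasureTheory

/-- The open set `O_m`: the complex plane minus the `m` rays `ℝ_{≥0}·e^{iπ(1+2p)/m}`. -/
def Om (m : ℕ) : Set ℂ :=
    {z : ℂ | ∀ p < m, ∀ t : ℝ, 0 ≤ t →
      z ≠ (t : ℂ) * Complex.exp (Real.pi * (1 + 2 * (p : ℂ)) / m * Complex.I)}

/-!
Substituting `u = t z` gives `I(z) = ∫_1^∞ z g(t z) dt` with `g(u) = (1+u^m)^{b/m}/u^{S+1}`.
On `O_m` the power `u^m` avoids `(-∞, 0]`, a condition stable under `u ↦ t u` for `t > 0`, so `g`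
is holomorphic along the rays `t z`, `t ≥ 1`, and `|g(t z)| ≲ t^{b-S-1} ≤ t^{-2}` locally uniformly.
Differentiation under the integral sign is justified by dominating the `z`-derivative of the
integrand through Cauchy's estimate, which needs only the bound on the integrand itself. Both
`∂_z (z g(t z))` and `∂_t (t g(t z))` equal `(u g(u))'` at `u = t z`, so
`I'(z) = ∫_1^∞ ∂_t (t g(t z)) dt = 0 - g(z)`.
-/

open Set Filter Topology Metric

theorem integrableOn_Ioi_one_div_sq (C : ℝ) :
    IntegrableOn (fun t : ℝ => C / t ^ 2) (Ioi 1) := by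
  refine IntegrableOn.congr_fun
    ((integrableOn_Ioi_rpow_of_lt (by norm_num : (-2 : ℝ) < -1) one_pos).const_mul C)
    (fun t ht => ?_) measurableSet_Ioi
  rw [Real.rpow_neg (zero_le_one.trans (le_of_lt ht)), Real.rpow_two, div_eq_mul_inv]

section RayIntegral

variable {g : ℂ → ℂ}

theorem hasDerivAt_mul_comp_mul {c w : ℂ} (hg : DifferentiableAt ℂ g (c * w)) :
    HasDerivAt (fun w => w * g (c * w)) (g (c * w) + c * w * deriv g (c * w)) w := by
  refine ((hasDerivAt_id' w).mul
    (hg.hasDerivAt.comp w ((hasDerivAt_id' w).const_mul c))).congr_deriv ?_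
  simp only [Function.comp_apply, one_mul, mul_one]
  ring

theorem integral_Ioi_one_add_mul_deriv_comp_mul {z : ℂ} {C : ℝ}
    (hg : ∀ t : ℝ, 1 ≤ t → DifferentiableAt ℂ g (t * z))
    (hint : IntegrableOn (fun t : ℝ => g (t * z) + t * z * deriv g (t * z)) (Ioi 1))
    (hdecay : ∀ t : ℝ, 1 ≤ t → ‖g (t * z)‖ ≤ C / t ^ 2) :
    ∫ t in Ioi (1 : ℝ), (g (t * z) + t * z * deriv g (t * z)) = -g z := by
  have hderiv : ∀ t : ℝ, 1 ≤ t → HasDerivAt (fun s : ℝ => s * g (s * z))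
      (g (t * z) + t * z * deriv g (t * z)) t := by
    intro t ht
    have := hasDerivAt_mul_comp_mul (c := z) (w := t) (by rw [mul_comm]; exact hg t ht)
    simp only [mul_comm z] at this
    exact this.comp_ofReal
  have htendsto : Tendsto (fun s : ℝ => s * g (s * z)) atTop (𝓝 0) := by
    refine squeeze_zero_norm' ?_ (tendsto_inv_atTop_zero.const_mul C |>.trans (by simp))
    filter_upwards [eventually_ge_atTop 1] with s hs
    have hs0 : 0 < s := zero_lt_one.trans_le hs
    calc ‖(s : ℂ) * g (s * z)‖ = s * ‖g (s * z)‖ := by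
          rw [norm_mul, norm_real, Real.norm_of_nonneg hs0.le]
      _ ≤ s * (C / s ^ 2) := by gcongr; exact hdecay s hs
      _ = C * s⁻¹ := by field_simp
  rw [integral_Ioi_of_hasDerivAt_of_tendsto (hderiv 1 le_rfl).continuousAt.continuousWithinAt
    (fun t ht => hderiv t (le_of_lt ht)) hint htendsto]
  simp

theorem continuousOn_comp_ofReal_mul {z : ℂ}
    (hg : ∀ t : ℝ, 1 ≤ t → DifferentiableAt ℂ g (t * z)) :
    ContinuousOn (fun t : ℝ => g (t * z)) (Ici 1) := fun t ht =>
  (ContinuousAt.comp (f := fun s : ℝ => (s : ℂ) * z) (hg t ht).continuousAt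
    (by fun_prop)).continuousWithinAt

theorem aestronglyMeasurable_add_mul_deriv_comp_ofReal_mul {z : ℂ}
    (hg : ∀ t : ℝ, 1 ≤ t → DifferentiableAt ℂ g (t * z)) :
    AEStronglyMeasurable (fun t : ℝ => g (t * z) + t * z * deriv g (t * z))
      (volume.restrict (Ioi 1)) := by
  have hlin : Continuous (fun t : ℝ => (t : ℂ) * z) := by fun_prop
  exact (((continuousOn_comp_ofReal_mul hg).mono Ioi_subset_Ici_self).aestronglyMeasurable
    measurableSet_Ioi).add (hlin.aestronglyMeasurable.mul
      ((measurable_deriv g).comp hlin.measurable).aestronglyMeasurable)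

theorem norm_add_mul_deriv_comp_mul_le {c z : ℂ} {r K : ℝ} (hr : 0 < r)
    (hg : ∀ w ∈ closedBall z r, DifferentiableAt ℂ g (c * w))
    (hK : ∀ w ∈ sphere z r, ‖w * g (c * w)‖ ≤ K) :
    ‖g (c * z) + c * z * deriv g (c * z)‖ ≤ K / r := by
  have hdiff : DifferentiableOn ℂ (fun w => w * g (c * w)) (closedBall z r) :=
    fun w hw => (hasDerivAt_mul_comp_mul (hg w hw)).differentiableAt.differentiableWithinAt
  rw [← (hasDerivAt_mul_comp_mul (hg z (mem_closedBall_self hr.le))).deriv]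
  exact norm_deriv_le_of_forall_mem_sphere_norm_le hr (hdiff.diffContOnCl_ball subset_rfl) hK

theorem hasDerivAt_integral_Ioi_one_mul_comp_mul {U : Set ℂ} (hU : IsOpen U)
    (hg : ∀ z ∈ U, ∀ t : ℝ, 1 ≤ t → DifferentiableAt ℂ g (t * z))
    (hdecay : ∀ z₀ ∈ U, ∃ C, ∀ᶠ z in 𝓝 z₀, ∀ t : ℝ, 1 ≤ t → ‖g (t * z)‖ ≤ C / t ^ 2)
    {z₀ : ℂ} (hz₀ : z₀ ∈ U) :
    HasDerivAt (fun z => ∫ t in Ioi (1 : ℝ), z * g (t * z)) (-g z₀) z₀ := by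
  obtain ⟨C, hC⟩ := hdecay z₀ hz₀
  obtain ⟨δ, hδ, hball⟩ := nhds_basis_closedBall.mem_iff.mp ((hU.eventually_mem hz₀).and hC)
  set K := (‖z₀‖ + δ) * C
  have hF_le : ∀ z ∈ closedBall z₀ δ, ∀ t : ℝ, 1 ≤ t → ‖z * g (t * z)‖ ≤ K / t ^ 2 := by
    intro z hz t ht
    rw [norm_mul, mul_div_assoc]
    exact mul_le_mul (norm_le_of_mem_closedBall hz) ((hball hz).2 t ht) (norm_nonneg _)
      (by positivity)
  have hF'_le : ∀ z ∈ ball z₀ (δ / 2), ∀ t : ℝ, 1 ≤ t →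
      ‖g (t * z) + t * z * deriv g (t * z)‖ ≤ K / (δ / 2) / t ^ 2 := by
    intro z hz t ht
    have hsub : closedBall z (δ / 2) ⊆ closedBall z₀ δ :=
      closedBall_subset_closedBall' (by linarith [mem_ball.mp hz])
    rw [div_right_comm]
    exact norm_add_mul_deriv_comp_mul_le (half_pos hδ)
      (fun w hw => hg w (hball (hsub hw)).1 t ht)
      (fun w hw => hF_le w (hsub (sphere_subset_closedBall hw)) t ht)
  have hF_meas : ∀ z ∈ U,
      AEStronglyMeasurable (fun t : ℝ => z * g (t * z)) (volume.restrict (Ioi 1)) :=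
    fun z hz => (continuousOn_const.mul ((continuousOn_comp_ofReal_mul (hg z hz)).mono
      Ioi_subset_Ici_self)).aestronglyMeasurable measurableSet_Ioi
  obtain ⟨hint, hderiv⟩ := hasDerivAt_integral_of_dominated_loc_of_deriv_le
    (μ := volume.restrict (Ioi 1)) (F := fun z (t : ℝ) => z * g (t * z))
    (F' := fun z (t : ℝ) => g (t * z) + t * z * deriv g (t * z))
    (ball_mem_nhds z₀ (half_pos hδ))
    (eventually_of_mem (hU.mem_nhds hz₀) hF_meas)
    ((integrableOn_Ioi_one_div_sq K).mono' (hF_meas z₀ hz₀) <| by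
      filter_upwards [ae_restrict_mem measurableSet_Ioi] with t ht
      exact hF_le z₀ (mem_closedBall_self hδ.le) t (le_of_lt ht))
    (aestronglyMeasurable_add_mul_deriv_comp_ofReal_mul (hg z₀ hz₀))
    (by
      filter_upwards [ae_restrict_mem measurableSet_Ioi] with t ht z hz
      exact hF'_le z hz t (le_of_lt ht))
    (integrableOn_Ioi_one_div_sq _)
    (by
      filter_upwards [ae_restrict_mem measurableSet_Ioi] with t ht z hz
      have hz' := hball (ball_subset_closedBall (ball_subset_ball (half_le_self hδ.le) hz))
      exact hasDerivAt_mul_comp_mul (hg z hz'.1 t (le_of_lt ht)))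
  rwa [integral_Ioi_one_add_mul_deriv_comp_mul (hg z₀ hz₀) hint
    (fun t ht => (hball (mem_closedBall_self hδ.le)).2 t ht)] at hderiv

end RayIntegral

theorem one_add_mem_slitPlane {w : ℂ} (hw : w ∈ slitPlane) : 1 + w ∈ slitPlane := by
  rw [mem_slitPlane_iff] at hw ⊢
  rcases hw with hw | hw
  · left; simp only [add_re, one_re]; linarith
  · right; simpa using hw

theorem ofReal_mul_mem_slitPlane {x : ℝ} (hx : 0 < x) {w : ℂ} (hw : w ∈ slitPlane) :
    (x : ℂ) * w ∈ slitPlane := by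
  rw [mem_slitPlane_iff] at hw ⊢
  simp only [re_ofReal_mul, im_ofReal_mul]
  rcases hw with hw | hw
  · exact Or.inl (mul_pos hx hw)
  · exact Or.inr (mul_ne_zero hx.ne' hw)

theorem ne_zero_of_pow_mem_slitPlane {m : ℕ} (hm : m ≠ 0) {u : ℂ} (hu : u ^ m ∈ slitPlane) :
    u ≠ 0 := by
  rintro rfl
  rw [zero_pow hm] at hu
  exact zero_notMem_slitPlane hu

theorem ofReal_mul_pow_mem_slitPlane {m : ℕ} {x : ℝ} (hx : 0 < x) {u : ℂ}
    (hu : u ^ m ∈ slitPlane) : ((x : ℂ) * u) ^ m ∈ slitPlane := by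
  rw [mul_pow, ← ofReal_pow]
  exact ofReal_mul_mem_slitPlane (pow_pos hx m) hu

theorem pow_mem_slitPlane_of_mem_Om {m : ℕ} (hm : m ≠ 0) {u : ℂ} (hu : u ∈ Om m) :
    u ^ m ∈ slitPlane := by
  by_contra h
  rw [mem_slitPlane_iff, not_or, not_lt, not_not] at h
  set ζ := exp (Real.pi * I / m)
  have hζ : ζ ^ m = -1 := by
    rw [← exp_nat_mul, mul_div_cancel₀ _ (Nat.cast_ne_zero.mpr hm), exp_pi_mul_I]
  -- `v = u / ζ` has a nonnegative real `m`-th power, so `v / ‖v‖` is an `m`-th root of unity.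
  set v := u / ζ
  have hv : v ^ m = ((‖v‖ ^ m : ℝ) : ℂ) := by
    have hre : v ^ m = ((-(u ^ m).re : ℝ) : ℂ) := by
      rw [div_pow, hζ, div_neg, div_one]
      apply Complex.ext <;> simp [h.2]
    rw [← norm_pow, hre, norm_real, Real.norm_of_nonneg (by linarith [h.1])]
  rcases eq_or_ne v 0 with hv0 | hv0
  · refine hu 0 (Nat.pos_of_ne_zero hm) 0 le_rfl ?_
    simpa [v, ζ, Complex.exp_ne_zero] using hv0
  have hnv : (‖v‖ : ℂ) ≠ 0 := ofReal_ne_zero.mpr (norm_ne_zero_iff.mpr hv0)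
  have hroot : (v / ‖v‖) ^ m = 1 := by
    rw [div_pow, hv, ofReal_pow, div_self (pow_ne_zero m hnv)]
  have : NeZero m := ⟨hm⟩
  obtain ⟨i, hi, hξ⟩ := (isPrimitiveRoot_exp m hm).eq_pow_of_pow_eq_one hroot
  refine hu i hi ‖v‖ (norm_nonneg v) ?_
  have hu' : u = ‖v‖ * (v / ‖v‖) * ζ := by
    rw [mul_div_cancel₀ _ hnv, div_mul_cancel₀ _ (Complex.exp_ne_zero _)]
  rw [hu', ← hξ, ← exp_nat_mul, mul_assoc, ← Complex.exp_add]
  congr 2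
  field_simp
  ring

theorem norm_cpow_natCast_div_le {m : ℕ} (hm : m ≠ 0) (b : ℕ) {w : ℂ} {x : ℝ} (hx : 0 ≤ x)
    (hw : ‖w‖ ≤ x ^ m) : ‖w ^ ((b : ℂ) / m)‖ ≤ x ^ b := by
  rw [show (b : ℂ) / m = ((b / m : ℝ) : ℂ) by push_cast; rfl, norm_cpow_real]
  calc ‖w‖ ^ ((b : ℝ) / m) ≤ (x ^ m) ^ ((b : ℝ) / m) :=
        Real.rpow_le_rpow (norm_nonneg w) hw (by positivity)
    _ = x ^ b := by
        rw [← Real.rpow_natCast x m, ← Real.rpow_mul hx, mul_div_cancel₀ _ (by exact_mod_cast hm),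
          Real.rpow_natCast]

noncomputable def abelIntegrand (m S b : ℕ) (u : ℂ) : ℂ :=
  (1 + u ^ m) ^ ((b : ℂ) / m) / u ^ (S + 1)

section AbelIntegrand

variable {m S b : ℕ}

theorem differentiableAt_abelIntegrand (hm : m ≠ 0) {u : ℂ} (hu : u ^ m ∈ slitPlane) :
    DifferentiableAt ℂ (abelIntegrand m S b) u :=
  (((differentiableAt_pow (x := u) m).const_add 1).cpow_const (one_add_mem_slitPlane hu)).div
    (differentiableAt_pow _) (pow_ne_zero _ (ne_zero_of_pow_mem_slitPlane hm hu))

theorem norm_abelIntegrand_ofReal_mul_le (hm : m ≠ 0) (hbS : b + 1 ≤ S) {t : ℝ} (ht : 1 ≤ t)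
    (u : ℂ) : ‖abelIntegrand m S b (t * u)‖ ≤ (1 + ‖u‖) ^ b / ‖u‖ ^ (S + 1) / t ^ 2 := by
  have ht0 : 0 < t := zero_lt_one.trans_le ht
  have hnorm : ‖(t : ℂ) * u‖ = t * ‖u‖ := by rw [norm_mul, norm_real, Real.norm_of_nonneg ht0.le]
  have hbase : ‖1 + ((t : ℂ) * u) ^ m‖ ≤ (t * (1 + ‖u‖)) ^ m :=
    calc ‖1 + ((t : ℂ) * u) ^ m‖ ≤ ‖(1 : ℂ)‖ + ‖((t : ℂ) * u) ^ m‖ := norm_add_le _ _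
      _ = 1 ^ m + (t * ‖u‖) ^ m := by rw [norm_one, one_pow, norm_pow, hnorm]
      _ ≤ (1 + t * ‖u‖) ^ m := pow_add_pow_le zero_le_one (by positivity) hm
      _ ≤ (t * (1 + ‖u‖)) ^ m := by gcongr; linarith
  obtain ⟨k, rfl⟩ := Nat.exists_eq_add_of_le hbS
  calc ‖abelIntegrand m (b + 1 + k) b (t * u)‖
      ≤ (t * (1 + ‖u‖)) ^ b / (t * ‖u‖) ^ (b + 1 + k + 1) := by
        rw [abelIntegrand, norm_div, norm_pow, hnorm]
        gcongr
        exact norm_cpow_natCast_div_le hm b (by positivity) hbase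
    _ = (1 + ‖u‖) ^ b / ‖u‖ ^ (b + 1 + k + 1) / t ^ (k + 2) := by
        rw [mul_pow, mul_pow, show b + 1 + k + 1 = b + (k + 2) by ring, pow_add t]
        field_simp
    _ ≤ (1 + ‖u‖) ^ b / ‖u‖ ^ (b + 1 + k + 1) / t ^ 2 := by
        gcongr
        omega

theorem exists_eventually_norm_abelIntegrand_ofReal_mul_le (hm : m ≠ 0) (hbS : b + 1 ≤ S)
    {z₀ : ℂ} (hz₀ : z₀ ≠ 0) :
    ∃ C, ∀ᶠ z in 𝓝 z₀, ∀ t : ℝ, 1 ≤ t → ‖abelIntegrand m S b (t * z)‖ ≤ C / t ^ 2 := by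
  have hcont : ContinuousAt (fun z : ℂ => (1 + ‖z‖) ^ b / ‖z‖ ^ (S + 1)) z₀ :=
    ContinuousAt.div (by fun_prop) (by fun_prop) (pow_ne_zero _ (norm_ne_zero_iff.mpr hz₀))
  refine ⟨(1 + ‖z₀‖) ^ b / ‖z₀‖ ^ (S + 1) + 1, ?_⟩
  filter_upwards [hcont.eventually (eventually_le_nhds (lt_add_one _))] with z hz t ht
  exact (norm_abelIntegrand_ofReal_mul_le hm hbS ht z).trans (by gcongr)

theorem abelI_eq_integral_mul_abelIntegrand {z : ℂ} (hz : z ≠ 0) :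
    abelI m S b z = ∫ t in Ioi (1 : ℝ), z * abelIntegrand m S b (t * z) := by
  rw [abelI, ← integral_const_mul]
  congr 1
  funext t
  rw [abelIntegrand, mul_pow (t : ℂ) z (S + 1), zpow_neg, zpow_natCast, pow_succ z S]
  field_simp

end AbelIntegrand

theorem stmt6_general (m S b : ℕ) (hlarge : S < 2 * m) (hb2 : 2 * b < S) :
    ∀ z ∈ Om m,
      HasDerivAt (abelI m S b) (-(1 + z ^ m) ^ ((b : ℂ) / m) / z ^ (S + 1)) z := by
  intro z hz
  have hm : m ≠ 0 := by omega
  have hbS : b + 1 ≤ S := by omega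
  have hzU : z ^ m ∈ slitPlane := pow_mem_slitPlane_of_mem_Om hm hz
  have hz0 : z ≠ 0 := ne_zero_of_pow_mem_slitPlane hm hzU
  have hderiv := hasDerivAt_integral_Ioi_one_mul_comp_mul
    (isOpen_slitPlane.preimage (continuous_pow m))
    (fun u hu t ht => differentiableAt_abelIntegrand hm
      (ofReal_mul_pow_mem_slitPlane (zero_lt_one.trans_le ht) hu))
    (fun u hu => exists_eventually_norm_abelIntegrand_ofReal_mul_le hm hbS
      (ne_zero_of_pow_mem_slitPlane hm hu)) hzU
  rw [neg_div]
  exact hderiv.congr_of_eventuallyEq <|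
    (eventually_ne_nhds hz0).mono fun w hw => abelI_eq_integral_mul_abelIntegrand hw

/-- `I = I_{m,S,b}` is holomorphic on `O_m` with `I'(z) = -(1+z^m)^{b/m}/z^{S+1}`. -/
theorem stmt6 (m S b : ℕ) (hS : 5 ≤ S) (hlarge : S < 2 * m) (hmS : m < S)
    (hb1 : 1 ≤ b) (hb2 : 2 * b < S) :
    ∀ z ∈ Om m,
      HasDerivAt (abelI m S b) (-(1 + z ^ m) ^ ((b : ℂ) / m) / z ^ (S + 1)) z :=
  stmt6_general m S b hlarge hb2
end

section
/- If ω is any m-th root of unity and z ∈ O_m, then I(ωz) = ω^{-S} I(z), where I(z) = ∫_{[z,z∞)} (1+u^m)^{b/m} du/u^{S+1}. -/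
open Complex MeasureTheory

-- The integrand sees `z` only through `z ^ m`, which `ω` fixes; only the prefactor `z ^ (-S)` moves.
theorem stmt7_general (m S b : ℕ)
    (ω : ℂ) (hω : ω ^ m = 1) (z : ℂ) :
    abelI m S b (ω * z) = ω ^ (-(S : ℤ)) * abelI m S b z := by
  have rotate_pow : ∀ t : ℂ, (t * (ω * z)) ^ m = (t * z) ^ m := fun t => by
    rw [mul_left_comm, mul_pow, hω, one_mul]
  simp only [abelI, rotate_pow, mul_zpow, mul_assoc]

/-- Rotation formula: if `ω` is an `m`-th root of unity and `z ∈ O_m`, then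
`I(ωz) = ω^{-S} I(z)`. -/
theorem stmt7 (m S b : ℕ) (hS : 5 ≤ S) (hlarge : S < 2 * m) (hmS : m < S)
    (hb1 : 1 ≤ b) (hb2 : 2 * b < S)
    (ω : ℂ) (hω : ω ^ m = 1) (z : ℂ) (hz : z ∈ Om m) :
    abelI m S b (ω * z) = ω ^ (-(S : ℤ)) * abelI m S b z :=
  stmt7_general m S b ω hω z
end

section
/- Let m, S, b be integers with S ≥ 5, S/2 < m < S, 1 ≤ b < S/2, and a = S - b. The number C_0 = Σ_{n≥0} binom(b/m, n)·(1/(a+mn) + 1/(mn - S)) is a convergent series and C_0 < 0. -/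
/-!
For `0 < x = b/m < 1` the coefficients `binom(x, n)`, `n ≥ 1`, alternate in sign, starting
positive, and satisfy `|binom(x, n)| ≤ 1/n`; since the weight `1/(a + mn) + 1/(mn - S)` is
`O(1/n)`, the series converges absolutely. For `n ≥ 2` the weight is positive and decreasing
(as `mn > S`), and `|binom(x, n)|` is nonincreasing, so each pair of terms `n = 2k + 2, 2k + 3`
has nonpositive sum. The first two terms add up to
`-b (m - b) (aS + m²) / (a S m (a + m) (S - m)) < 0`.
-/

noncomputable def genBinomR (x : ℝ) (n : ℕ) : ℝ :=
    (∏ k ∈ Finset.range n, (x - k)) / (n.factorial : ℝ)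

open Filter

section genBinomR

variable {x : ℝ}

lemma genBinomR_zero (x : ℝ) : genBinomR x 0 = 1 := by
  simp [genBinomR]

lemma genBinomR_succ (x : ℝ) (n : ℕ) :
    genBinomR x (n + 1) = genBinomR x n * (x - n) / (n + 1) := by
  rw [genBinomR, genBinomR, Finset.prod_range_succ, Nat.factorial_succ]
  push_cast
  rw [div_mul_eq_mul_div, div_div, mul_comm ((n : ℝ) + 1)]

lemma genBinomR_one (x : ℝ) : genBinomR x 1 = x := by
  simpa [genBinomR_zero] using genBinomR_succ x 0

lemma neg_one_pow_mul_genBinomR_succ_nonneg (hx0 : 0 ≤ x) (hx1 : x ≤ 1) (n : ℕ) :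
    0 ≤ (-1) ^ n * genBinomR x (n + 1) := by
  induction n with
  | zero => simpa [genBinomR_one] using hx0
  | succ n ih =>
    have hxn : x ≤ n + 1 := by linarith [(n.cast_nonneg : (0 : ℝ) ≤ n)]
    have key : (-1) ^ (n + 1) * genBinomR x (n + 1 + 1)
        = (-1) ^ n * genBinomR x (n + 1) * ((n + 1 - x) / (n + 1 + 1)) := by
      rw [genBinomR_succ x (n + 1)]; push_cast; ring
    rw [key]
    exact mul_nonneg ih (div_nonneg (by linarith) (by positivity))

lemma abs_genBinomR_succ_le (hx0 : 0 ≤ x) (hx1 : x ≤ 1) (n : ℕ) :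
    |genBinomR x (n + 1)| ≤ 1 / (n + 1) := by
  induction n with
  | zero => simpa [genBinomR_one, abs_of_nonneg hx0] using hx1
  | succ n ih =>
    have hxn : |x - (n + 1)| ≤ n + 1 := by
      rw [abs_le]; constructor <;> linarith [(n.cast_nonneg : (0 : ℝ) ≤ n)]
    rw [genBinomR_succ, abs_div, abs_mul, abs_of_pos (by positivity : (0 : ℝ) < (n + 1 : ℕ) + 1)]
    push_cast
    calc |genBinomR x (n + 1)| * |x - (n + 1)| / (n + 1 + 1)
        ≤ 1 / (n + 1) * (n + 1) / (n + 1 + 1) := by gcongr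
      _ = 1 / (n + 1 + 1) := by field_simp

lemma genBinomR_mul_add_genBinomR_succ_mul_nonpos {n : ℕ} {c c' : ℝ} (hx : -1 ≤ x)
    (hneg : genBinomR x n ≤ 0) (hc' : 0 ≤ c') (hcc' : c' ≤ c) :
    genBinomR x n * c + genBinomR x (n + 1) * c' ≤ 0 := by
  have hratio : (n - x) / (n + 1) * c' ≤ c := by
    have hle : (n - x) / (n + 1) ≤ 1 := by rw [div_le_one (by positivity)]; linarith
    exact (mul_le_of_le_one_left hc' hle).trans hcc'
  have h : genBinomR x n * c + genBinomR x (n + 1) * c'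
      = genBinomR x n * (c - (n - x) / (n + 1) * c') := by
    rw [genBinomR_succ]; ring
  rw [h]
  exact mul_nonpos_of_nonpos_of_nonneg hneg (by linarith)

lemma summable_genBinomR_mul (hx0 : 0 ≤ x) (hx1 : x ≤ 1) {F : ℕ → ℝ} {C : ℝ}
    (hF : ∀ᶠ n in atTop, |F n| ≤ C / n) :
    Summable fun n => genBinomR x n * F n := by
  refine Summable.of_norm_bounded_eventually_nat
    ((Real.summable_one_div_nat_pow.mpr one_lt_two).mul_left C) ?_
  filter_upwards [hF, eventually_ge_atTop 1] with n hFn hn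
  obtain ⟨k, rfl⟩ := Nat.exists_eq_add_of_le' hn
  have hg := abs_genBinomR_succ_le hx0 hx1 k
  push_cast at hFn ⊢
  rw [Real.norm_eq_abs, abs_mul]
  calc |genBinomR x (k + 1)| * |F (k + 1)| ≤ 1 / (k + 1) * (C / (k + 1)) := by
        gcongr
    _ = C * (1 / (k + 1) ^ 2) := by field_simp

end genBinomR

lemma tsum_neg_of_pairs_nonpos {f : ℕ → ℝ} (hf : Summable f) (h01 : f 0 + f 1 < 0)
    (hpairs : ∀ k, f (2 * k + 2) + f (2 * k + 3) ≤ 0) : ∑' n, f n < 0 := by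
  have heven : Summable fun k => f (2 * k) := hf.comp_injective (mul_right_injective₀ two_ne_zero)
  have hodd : Summable fun k => f (2 * k + 1) :=
    hf.comp_injective ((add_left_injective 1).comp (mul_right_injective₀ two_ne_zero))
  rw [← tsum_even_add_odd heven hodd, ← (heven.hasSum.add hodd.hasSum).tsum_eq]
  refine (Summable.tsum_lt_tsum (i := 0) (g := 0) ?_ (by simpa using h01)
    (heven.add hodd) summable_zero).trans_eq tsum_zero
  rintro (_ | k)
  · simpa using h01.le
  · exact hpairs k

noncomputable def c0Weight (a m S n : ℕ) : ℝ := 1 / ((a : ℝ) + m * n) + 1 / ((m : ℝ) * n - S)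

section c0Weight

variable {a m S n : ℕ}

lemma c0Weight_pos (h : S < m * n) : 0 < c0Weight a m S n := by
  have h' : (S : ℝ) < m * n := by exact_mod_cast h
  have : (0 : ℝ) < (m : ℝ) * n - S := by linarith
  unfold c0Weight
  positivity

lemma c0Weight_succ_le (h : S < m * n) : c0Weight a m S (n + 1) ≤ c0Weight a m S n := by
  have h' : (S : ℝ) < m * n := by exact_mod_cast h
  unfold c0Weight
  push_cast
  gcongr <;> linarith [(m.cast_nonneg : (0 : ℝ) ≤ m)]

lemma abs_c0Weight_le (hn : 0 < n) (h : S + n ≤ m * n) : |c0Weight a m S n| ≤ 2 / n := by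
  have h' : (S : ℝ) + n ≤ m * n := by exact_mod_cast h
  have hn' : (0 : ℝ) < n := by exact_mod_cast hn
  rw [abs_of_pos (c0Weight_pos (by omega)), c0Weight, show (2 : ℝ) / n = 1 / n + 1 / n by ring]
  gcongr
  · linarith [(a.cast_nonneg : (0 : ℝ) ≤ a)]
  · linarith

end c0Weight

lemma c0Weight_zero_add_mul_c0Weight_one_neg {m S b a : ℕ} (hlarge : S < 2 * m) (hmS : m < S)
    (hb1 : 1 ≤ b) (hb2 : 2 * b < S) (ha : a + b = S) :
    c0Weight a m S 0 + b / m * c0Weight a m S 1 < 0 := by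
  have hbm : (b : ℝ) < m := by exact_mod_cast (by omega : b < m)
  have hmS' : (m : ℝ) < a + b := by exact_mod_cast (by omega : m < a + b)
  have hb : (0 : ℝ) < b := by exact_mod_cast hb1
  have ha0 : (0 : ℝ) < a := by exact_mod_cast (by omega : 0 < a)
  have hS : (S : ℝ) = a + b := by rw [← ha]; push_cast; ring
  have hm : (0 : ℝ) < m := by linarith
  have hexpand : c0Weight a m S 0 + b / m * c0Weight a m S 1
      = -(b * (m - b) * (a * (a + b) + m ^ 2)) / (a * (a + b) * m * (a + m) * (a + b - m)) := by
    have : (a : ℝ) + b ≠ 0 := by linarith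
    have : (m : ℝ) - (a + b) ≠ 0 := by linarith
    have : (a : ℝ) + b - m ≠ 0 := by linarith
    simp only [c0Weight, hS, Nat.cast_zero, Nat.cast_one, mul_zero, mul_one, add_zero, zero_sub]
    field_simp
    ring
  rw [hexpand]
  apply div_neg_of_neg_of_pos
  · have : (0 : ℝ) < m - b := by linarith
    have : (0 : ℝ) < a + b - m := by linarith
    rw [neg_lt_zero]; positivity
  · have : (0 : ℝ) < a + b - m := by linarith
    positivity

theorem stmt8_general (m S b a : ℕ) (hlarge : S < 2 * m) (hmS : m < S)
    (hb1 : 1 ≤ b) (hb2 : 2 * b < S) (ha : a + b = S) :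
    ∃ C₀ : ℝ,
      HasSum
        (fun n : ℕ =>
          genBinomR ((b : ℝ) / m) n * (1 / ((a : ℝ) + m * n) + 1 / ((m : ℝ) * n - S)))
        C₀ ∧ C₀ < 0 := by
  set x : ℝ := b / m
  have hx0 : 0 ≤ x := by positivity
  have hx1 : x ≤ 1 := div_le_one_of_le₀ (by exact_mod_cast (by omega : b ≤ m)) m.cast_nonneg
  have hweight : ∀ n, 2 ≤ n → S < m * n := fun n hn => by nlinarith
  have hsum : Summable fun n => genBinomR x n * c0Weight a m S n :=
    summable_genBinomR_mul hx0 hx1 (C := 2) <| (eventually_ge_atTop S).mono fun n hn =>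
      abs_c0Weight_le (by omega) (by nlinarith)
  refine ⟨_, hsum.hasSum, tsum_neg_of_pairs_nonpos hsum ?_ fun k => ?_⟩
  · simpa [genBinomR_zero, genBinomR_one] using
      c0Weight_zero_add_mul_c0Weight_one_neg hlarge hmS hb1 hb2 ha
  · have hneg : genBinomR x (2 * k + 2) ≤ 0 := by
      have := neg_one_pow_mul_genBinomR_succ_nonneg hx0 hx1 (2 * k + 1)
      rwa [pow_succ, pow_mul, neg_one_sq, one_pow, one_mul, neg_one_mul, neg_nonneg] at this
    exact genBinomR_mul_add_genBinomR_succ_mul_nonpos (by linarith) hneg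
      (c0Weight_pos (hweight _ (by omega))).le (c0Weight_succ_le (hweight _ (by omega)))

/-- The series `C_0 = Σ_{n≥0} binom(b/m,n)·(1/(a+mn) + 1/(mn-S))` converges
and its sum is negative (`a = S - b`). -/
theorem stmt8 (m S b a : ℕ) (hS : 5 ≤ S) (hlarge : S < 2 * m) (hmS : m < S)
    (hb1 : 1 ≤ b) (hb2 : 2 * b < S) (ha : a + b = S) :
    ∃ C₀ : ℝ,
      HasSum
        (fun n : ℕ =>
          genBinomR ((b : ℝ) / m) n * (1 / ((a : ℝ) + m * n) + 1 / ((m : ℝ) * n - S)))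
        C₀ ∧ C₀ < 0 :=
  stmt8_general m S b a hlarge hmS hb1 hb2 ha
end

section
/- Let ℱ be the characteristic function of a real random variable X possessing moments of all orders, whose law satisfies the fixed-point equation X =(in law) e^{-mτ}([a+1]X + [b]Y) with τ ~ Exp(1) independent of all else, where [n]Z denotes the sum of n independent copies of Z. Then for all x ≠ 0, ℱ(x) = (x/(m|x|^{1+1/m})) ∫_0^x ℱ^{a+1}(t) 𝒢^b(t) |t|^{1/m - 1} dt, where 𝒢 is the characteristic function of Y. -/
/-!
Let `S` be the sum of the `a + 1` copies of `X` and the `b` copies of `Y`. By independence its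
characteristic function is `ℱ^{a+1} 𝒢^b`, and since `τ` is independent of `S`, integrating out `τ`
gives `ℱ(x) = ∫_0^∞ e^{-s} ℱ^{a+1}𝒢^b(x e^{-ms}) ds`. The substitution `t = x e^{-ms}` maps
`(0, ∞)` onto the interval between `0` and `x`, with `e^{-s} ds = |t|^{1/m-1} |dt| / (m |x|^{1/m})`.
-/

open MeasureTheory ProbabilityTheory Complex Set Real

lemma integral_exp_I_mul_eq_charFun (μ : Measure ℝ) (t : ℝ) :
    ∫ x, cexp (I * t * x) ∂μ = charFun μ t := by
  rw [charFun_apply_real]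
  congr with x
  ring_nf

lemma integral_expMeasure_eq_integral_Ioi {E : Type*} [NormedAddCommGroup E] [NormedSpace ℝ E]
    {r : ℝ} (hr : 0 ≤ r) (G : ℝ → E) :
    ∫ s, G s ∂expMeasure r = ∫ s in Ioi 0, (r * rexp (-(r * s))) • G s := by
  have hdens : Measurable (exponentialPDF r) :=
    ENNReal.measurable_ofReal.comp (measurable_exponentialPDFReal r)
  rw [expMeasure, gammaMeasure, ← integral_Ici_eq_integral_Ioi,
    ← integral_indicator measurableSet_Ici]
  change ∫ s, G s ∂volume.withDensity (exponentialPDF r) = _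
  rw [integral_withDensity_eq_integral_toReal_smul hdens
    (ae_of_all _ fun _ => ENNReal.ofReal_lt_top)]
  congr with s
  by_cases hs : 0 ≤ s
  · rw [indicator_of_mem (mem_Ici.2 hs), exponentialPDF_of_nonneg hs,
      ENNReal.toReal_ofReal (by positivity)]
  · rw [indicator_of_notMem (by simpa using hs), exponentialPDF_of_neg (not_le.1 hs)]
    simp

namespace ProbabilityTheory

lemma IndepFun.charFun_map_mul_eq_integral {Ω T : Type*} {mΩ : MeasurableSpace Ω}
    {mT : MeasurableSpace T} {P : Measure Ω} [IsFiniteMeasure P] {τ : Ω → T} {S : Ω → ℝ}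
    (hτ : Measurable τ) (hS : Measurable S) (hτS : IndepFun τ S P) {g : T → ℝ}
    (hg : Measurable g) (x : ℝ) :
    charFun (P.map fun ω => g (τ ω) * S ω) x = ∫ s, charFun (P.map S) (g s * x) ∂P.map τ := by
  have hprod : P.map (fun ω => (τ ω, S ω)) = (P.map τ).prod (P.map S) :=
    (indepFun_iff_map_prod_eq_prod_map_map hτ.aemeasurable hS.aemeasurable).1 hτS
  have hmul : Measurable fun p : T × ℝ => g p.1 * p.2 := by fun_prop
  have hmap : P.map (fun ω => g (τ ω) * S ω) =
      ((P.map τ).prod (P.map S)).map fun p => g p.1 * p.2 := by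
    rw [← hprod, Measure.map_map hmul (hτ.prodMk hS)]
    rfl
  have hint : Integrable (fun p : T × ℝ => cexp (x * ((g p.1 * p.2 : ℝ) : ℂ) * I))
      ((P.map τ).prod (P.map S)) :=
    (integrable_const (1 : ℝ)).mono' (by fun_prop)
      (ae_of_all _ fun p => by rw [← ofReal_mul, norm_exp_ofReal_mul_I])
  rw [hmap, charFun_apply_real, integral_map hmul.aemeasurable (by fun_prop), integral_prod _ hint]
  congr with s
  rw [charFun_apply_real]
  congr with t
  push_cast
  ring_nf

end ProbabilityTheory

lemma image_mul_exp_neg_mul_Ioi {c x : ℝ} (hc : 0 < c) (hx : 0 < x) :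
    (fun s => x * rexp (-(c * s))) '' Ioi 0 = Ioo 0 x := by
  ext t
  simp only [mem_image, mem_Ioi, mem_Ioo]
  constructor
  · rintro ⟨s, hs, rfl⟩
    have : rexp (-(c * s)) < 1 := Real.exp_lt_one_iff.2 (by nlinarith)
    exact ⟨by positivity, by nlinarith [Real.exp_pos (-(c * s))]⟩
  · rintro ⟨ht, htx⟩
    refine ⟨Real.log (x / t) / c, div_pos (Real.log_pos ((one_lt_div ht).2 htx)) hc, ?_⟩
    rw [mul_div_cancel₀ _ hc.ne', ← Real.log_inv, Real.exp_log (by positivity), inv_div]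
    field_simp

section ChangeOfVariables

variable {E : Type*} [NormedAddCommGroup E] [NormedSpace ℝ E]

lemma intervalIntegral_abs_rpow_smul_eq_integral_Ioi_of_pos {c x : ℝ} (hc : 0 < c)
    (hx : 0 < x) (H : ℝ → E) :
    ∫ t in 0..x, |t| ^ (1 / c - 1) • H t =
      (c * x ^ (1 / c)) • ∫ s in Ioi 0, rexp (-s) • H (x * rexp (-(c * s))) := by
  have hderiv : ∀ s ∈ Ioi (0 : ℝ), HasDerivWithinAt (fun s => x * rexp (-(c * s)))
      (-(c * x * rexp (-(c * s)))) (Ioi 0) s := fun s _ => by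
    have h := ((hasDerivAt_id s).const_mul c).neg.exp.const_mul x
    simp only [id, mul_one, Pi.neg_apply] at h
    exact (h.congr_deriv (by ring)).hasDerivWithinAt
  have hinj : InjOn (fun s => x * rexp (-(c * s))) (Ioi 0) := fun s _ t _ hst => by
    simpa [hx.ne', hc.ne'] using hst
  have hjac : ∀ s : ℝ, |-(c * x * rexp (-(c * s)))| * |x * rexp (-(c * s))| ^ (1 / c - 1) =
      c * x ^ (1 / c) * rexp (-s) := fun s => by
    rw [abs_neg, abs_of_pos (by positivity), abs_of_pos (by positivity),
      Real.mul_rpow hx.le (Real.exp_pos _).le, ← Real.exp_mul]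
    calc c * x * rexp (-(c * s)) * (x ^ (1 / c - 1) * rexp (-(c * s) * (1 / c - 1)))
        = c * (x ^ (1 : ℝ) * x ^ (1 / c - 1)) * rexp (-(c * s) + -(c * s) * (1 / c - 1)) := by
          rw [Real.rpow_one, Real.exp_add]; ring
      _ = c * x ^ (1 / c) * rexp (-s) := by
          rw [← Real.rpow_add hx]
          congr 3 <;> field_simp <;> ring
  rw [intervalIntegral.integral_of_le hx.le, integral_Ioc_eq_integral_Ioo,
    ← image_mul_exp_neg_mul_Ioi hc hx,
    integral_image_eq_integral_abs_deriv_smul measurableSet_Ioi hderiv hinj, ← integral_smul]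
  congr with s
  rw [smul_smul, hjac, mul_smul]

lemma integral_Ioi_exp_neg_smul_eq_intervalIntegral {c x : ℝ} (hc : 0 < c) (hx : x ≠ 0)
    (H : ℝ → E) :
    ∫ s in Ioi 0, rexp (-s) • H (x * rexp (-(c * s))) =
      (x / (c * |x| ^ (1 + 1 / c))) • ∫ t in 0..x, |t| ^ (1 / c - 1) • H t := by
  rcases hx.lt_or_gt with hneg | hpos
  · have hcomp := intervalIntegral_abs_rpow_smul_eq_integral_Ioi_of_pos hc (neg_pos.2 hneg)
      (H ∘ Neg.neg)
    simp only [Function.comp_apply, neg_mul, neg_neg] at hcomp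
    have hflip : ∫ t in 0..-x, |t| ^ (1 / c - 1) • H (-t) =
        -∫ t in 0..x, |t| ^ (1 / c - 1) • H t := by
      simpa [abs_neg, intervalIntegral.integral_symm 0 x] using
        intervalIntegral.integral_comp_neg (a := 0) (b := -x) fun t => |t| ^ (1 / c - 1) • H t
    have hscalar : -(x / (c * (-x * (-x) ^ (1 / c))) * (c * (-x) ^ (1 / c))) = 1 := by
      have : (-x) ^ (1 / c) ≠ 0 := (Real.rpow_pos_of_pos (neg_pos.2 hneg) _).ne'
      field_simp
    rw [hflip, neg_eq_iff_eq_neg] at hcomp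
    rw [hcomp, smul_neg, smul_smul, ← neg_smul, ← abs_neg, abs_of_pos (neg_pos.2 hneg),
      Real.rpow_add (neg_pos.2 hneg), Real.rpow_one, hscalar, one_smul]
  · rw [intervalIntegral_abs_rpow_smul_eq_integral_Ioi_of_pos hc hpos, smul_smul,
      abs_of_pos hpos, Real.rpow_add hpos, Real.rpow_one]
    field_simp
    simp

end ChangeOfVariables

namespace ProbabilityTheory

lemma iIndepFun.indepFun_none_sum_some {Ω ι β : Type*} {mΩ : MeasurableSpace Ω}
    {P : Measure Ω} [Fintype ι] [MeasurableSpace β] [AddCommMonoid β] [MeasurableAdd₂ β]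
    {F : Option ι → Ω → β} (hF : iIndepFun F P) (hmeas : ∀ i, Measurable (F i)) :
    IndepFun (F none) (fun ω => ∑ i, F (some i) ω) P := by
  convert (hF.indepFun_finsetSum_of_notMem hmeas
    (s := Finset.univ.map Function.Embedding.some) (i := none) (by simp)).symm using 1
  ext ω
  simp [Finset.sum_apply, Finset.sum_map]

end ProbabilityTheory

theorem stmt14_general (a b m : ℕ) (hm : 0 < m)
    (μX μY : Measure ℝ)
    (Ω : Type*) [MeasureSpace Ω] [IsProbabilityMeasure (ℙ : Measure Ω)]
    (F : Option (Fin (a + 1) ⊕ Fin b) → Ω → ℝ)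
    (hmeas : ∀ i, Measurable (F i))
    (hindep : iIndepFun F ℙ)
    (hτ : Measure.map (F none) ℙ = expMeasure 1)
    (hX : ∀ i : Fin (a + 1), Measure.map (F (some (Sum.inl i))) ℙ = μX)
    (hY : ∀ j : Fin b, Measure.map (F (some (Sum.inr j))) ℙ = μY)
    (hfix :
      Measure.map
        (fun ω =>
          Real.exp (-(m : ℝ) * F none ω) *
            ((∑ i : Fin (a + 1), F (some (Sum.inl i)) ω) +
              ∑ j : Fin b, F (some (Sum.inr j)) ω))
        ℙ = μX) :
    ∀ x : ℝ, x ≠ 0 →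
      (∫ t : ℝ, Complex.exp (Complex.I * x * t) ∂μX) =
        ((x / (m * |x| ^ (1 + 1 / (m : ℝ))) : ℝ) : ℂ) *
          ∫ t in (0 : ℝ)..x,
            (∫ s : ℝ, Complex.exp (Complex.I * t * s) ∂μX) ^ (a + 1) *
              (∫ s : ℝ, Complex.exp (Complex.I * t * s) ∂μY) ^ b *
              ((|t| ^ ((1 : ℝ) / m - 1) : ℝ) : ℂ) := by
  intro x hx
  set S : Ω → ℝ := fun ω => ∑ i, F (some i) ω
  have hS : Measurable S := Finset.measurable_sum _ fun i _ => hmeas (some i)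
  have hcharS (t : ℝ) :
      charFun (Measure.map S ℙ) t = charFun μX t ^ (a + 1) * charFun μY t ^ b := by
    rw [(hindep.precomp (Option.some_injective _)).charFun_map_fun_sum_eq_prod
      fun i => (hmeas (some i)).aemeasurable]
    simp [Fintype.prod_sum_type, hX, hY]
  have hlaw : μX = Measure.map (fun ω => rexp (-(m * F none ω)) * S ω) ℙ := by
    simp only [← hfix, S, Fintype.sum_sum_type, neg_mul]
  simp only [integral_exp_I_mul_eq_charFun]
  calc charFun μX x
      = ∫ s, charFun (Measure.map S ℙ) (rexp (-(m * s)) * x) ∂Measure.map (F none) ℙ := by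
        nth_rw 1 [hlaw]
        exact (hindep.indepFun_none_sum_some hmeas).charFun_map_mul_eq_integral (hmeas none) hS
          (g := fun s => rexp (-(m * s))) (by fun_prop) x
    _ = ∫ s in Ioi 0, rexp (-s) •
          (charFun μX (x * rexp (-(m * s))) ^ (a + 1) * charFun μY (x * rexp (-(m * s))) ^ b) := by
        simp only [hτ, integral_expMeasure_eq_integral_Ioi zero_le_one, one_mul, hcharS,
          mul_comm _ x]
    _ = _ := by
        rw [integral_Ioi_exp_neg_smul_eq_intervalIntegral
          (H := fun t => charFun μX t ^ (a + 1) * charFun μY t ^ b) (Nat.cast_pos.2 hm) hx,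
          Complex.real_smul]
        congr 1
        refine intervalIntegral.integral_congr fun t _ => ?_
        simp only [Complex.real_smul]
        ring

/-- If `X` (with law `μX`) satisfies the fixed-point equation in law
`X = e^{-mτ}([a+1]X + [b]Y)` where `τ ~ Exp(1)` and all the copies are mutually
independent, and `X`, `Y` have moments of all orders, then the characteristic
function `ℱ` of `X` satisfies, for all `x ≠ 0`,
`ℱ(x) = (x/(m|x|^{1+1/m})) ∫_0^x ℱ^{a+1}(t) 𝒢^b(t) |t|^{1/m-1} dt`,
where `𝒢` is the characteristic function of `Y`. -/
theorem stmt14 (a b m : ℕ) (ha : 0 < a) (hb : 0 < b) (hm : 0 < m)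
    (μX μY : Measure ℝ) [IsProbabilityMeasure μX] [IsProbabilityMeasure μY]
    (hmomX : ∀ p : ℕ, Integrable (fun t : ℝ => |t| ^ p) μX)
    (hmomY : ∀ p : ℕ, Integrable (fun t : ℝ => |t| ^ p) μY)
    (Ω : Type*) [MeasureSpace Ω] [IsProbabilityMeasure (ℙ : Measure Ω)]
    (F : Option (Fin (a + 1) ⊕ Fin b) → Ω → ℝ)
    (hmeas : ∀ i, Measurable (F i))
    (hindep : iIndepFun F ℙ)
    (hτ : Measure.map (F none) ℙ = expMeasure 1)
    (hX : ∀ i : Fin (a + 1), Measure.map (F (some (Sum.inl i))) ℙ = μX)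
    (hY : ∀ j : Fin b, Measure.map (F (some (Sum.inr j))) ℙ = μY)
    (hfix :
      Measure.map
        (fun ω =>
          Real.exp (-(m : ℝ) * F none ω) *
            ((∑ i : Fin (a + 1), F (some (Sum.inl i)) ω) +
              ∑ j : Fin b, F (some (Sum.inr j)) ω))
        ℙ = μX) :
    ∀ x : ℝ, x ≠ 0 →
      (∫ t : ℝ, Complex.exp (Complex.I * x * t) ∂μX) =
        ((x / (m * |x| ^ (1 + 1 / (m : ℝ))) : ℝ) : ℂ) *
          ∫ t in (0 : ℝ)..x,
            (∫ s : ℝ, Complex.exp (Complex.I * t * s) ∂μX) ^ (a + 1) *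
              (∫ s : ℝ, Complex.exp (Complex.I * t * s) ∂μY) ^ b *
              ((|t| ^ ((1 : ℝ) / m - 1) : ℝ) : ℂ) :=
  stmt14_general a b m hm μX μY Ω F hmeas hindep hτ hX hY hfix
end

section
/- If f, g are differentiable nonvanishing complex-valued functions on an interval satisfying f' = -(1/S) f^{a+1} g^b and g' = -(1/S) f^c g^{d+1} with a + b = c + d = S and m = a - c = d - b, then the function 1/g^m - 1/f^m is constant (it is a first integral of the system). -/
/-! Along a solution, `f' / f ^ (m + 1)` and `g' / g ^ (m + 1)` both equal `-(1/S) f ^ c g ^ b`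
(this is where `a = c + m` and `d = b + m` enter), so the derivatives `-m f' / f ^ (m + 1)` and
`-m g' / g ^ (m + 1)` of `1 / f ^ m` and `1 / g ^ m` agree and their difference is constant. -/

theorem Convex.eq_of_forall_hasDerivAt_zero {E : Type*} [NormedAddCommGroup E] [NormedSpace ℝ E]
    {f : ℝ → E} {s : Set ℝ} (hs : Convex ℝ s) (hf : ∀ x ∈ s, HasDerivAt f 0 x)
    {x y : ℝ} (hx : x ∈ s) (hy : y ∈ s) : f x = f y := by
  have h := hs.norm_image_sub_le_of_norm_hasDerivWithin_le (C := 0)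
    (fun z hz => (hf z hz).hasDerivWithinAt) (fun _ _ => norm_zero.le) hy hx
  rw [zero_mul, norm_le_zero_iff, sub_eq_zero] at h
  exact h

theorem HasDerivAt.one_div_pow {𝕜 𝕜' : Type*} [NontriviallyNormedField 𝕜]
    [NontriviallyNormedField 𝕜'] [NormedAlgebra 𝕜 𝕜'] {f : 𝕜 → 𝕜'} {f' : 𝕜'} {x : 𝕜}
    (hf : HasDerivAt f f' x) (hfx : f x ≠ 0) (m : ℕ) :
    HasDerivAt (fun y => 1 / f y ^ m) (-m * (f' / f x ^ (m + 1))) x := by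
  have h : HasDerivAt (fun y => (f y ^ m)⁻¹) _ x :=
    ((hasDerivAt_pow m (f x)).inv (pow_ne_zero m hfx)).comp x hf
  simp only [one_div]
  refine h.congr_deriv ?_
  rcases m with _ | m
  · simp
  · field_simp
    push_cast
    ring

theorem stmt16_general (a b c d S m : ℕ)
    (hm1 : a = c + m) (hm2 : d = b + m)
    (s : Set ℝ) (hs : s.OrdConnected) (f g : ℝ → ℂ)
    (hfne : ∀ x ∈ s, f x ≠ 0) (hgne : ∀ x ∈ s, g x ≠ 0)
    (hf : ∀ x ∈ s, HasDerivAt f (-(1 / (S : ℂ)) * f x ^ (a + 1) * g x ^ b) x)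
    (hg : ∀ x ∈ s, HasDerivAt g (-(1 / (S : ℂ)) * f x ^ c * g x ^ (d + 1)) x) :
    ∀ x ∈ s, ∀ y ∈ s,
      1 / g x ^ m - 1 / f x ^ m = 1 / g y ^ m - 1 / f y ^ m := by
  subst hm1 hm2
  have hderiv : ∀ x ∈ s, HasDerivAt (fun x => 1 / g x ^ m - 1 / f x ^ m) 0 x := by
    intro x hx
    have hfx := hfne x hx
    have hgx := hgne x hx
    have hratio : -(1 / (S : ℂ)) * f x ^ (c + m + 1) * g x ^ b / f x ^ (m + 1) =
        -(1 / (S : ℂ)) * f x ^ c * g x ^ (b + m + 1) / g x ^ (m + 1) := by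
      field_simp
      ring
    have h := ((hg x hx).one_div_pow hgx m).sub ((hf x hx).one_div_pow hfx m)
    rwa [hratio, sub_self] at h
  intro x hx y hy
  exact hs.convex.eq_of_forall_hasDerivAt_zero hderiv hx hy

/-- First integral of the monomial system: if `f, g` are differentiable, nonvanishing
on an interval `s` and satisfy `f' = -(1/S) f^{a+1} g^b`, `g' = -(1/S) f^c g^{d+1}`
with `a+b = c+d = S`, `m = a-c = d-b`, then `1/g^m - 1/f^m` is constant on `s`. -/
theorem stmt16 (a b c d S m : ℕ)
    (hab : a + b = S) (hcd : c + d = S) (hm1 : a = c + m) (hm2 : d = b + m)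
    (hS : 0 < S) (hmpos : 0 < m)
    (s : Set ℝ) (hs : s.OrdConnected) (f g : ℝ → ℂ)
    (hfne : ∀ x ∈ s, f x ≠ 0) (hgne : ∀ x ∈ s, g x ≠ 0)
    (hf : ∀ x ∈ s, HasDerivAt f (-(1 / (S : ℂ)) * f x ^ (a + 1) * g x ^ b) x)
    (hg : ∀ x ∈ s, HasDerivAt g (-(1 / (S : ℂ)) * f x ^ c * g x ^ (d + 1)) x) :
    ∀ x ∈ s, ∀ y ∈ s,
      1 / g x ^ m - 1 / f x ^ m = 1 / g y ^ m - 1 / f y ^ m :=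
  stmt16_general a b c d S m hm1 hm2 s hs f g hfne hgne hf hg
end
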